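/- For every probability vector p and every real number t > 1, the series ∑_{k=0}^∞ t^{-k} s_k(p) converges if and only if limsup_{k→∞} s_k(p)^{1/k} < t. (This is the paper's Corollary on tracial entropies of graphs: with t = e^β, a trace τ lies in Tr_β(A), i.e. c_{τ,β} < ∞, if and only if h_X^τ < β.) -/

import Mathlib

/-- `s_k(p) = ∑_{i,j} p_i (G^k)_{ij}`, where `G` has natural-number entries. -/
def sk {N : ℕ} (G : Matrix (Fin N) (Fin N) ℕ) (p : Fin N → ℝ) (k : ℕ) : ℝ :=
  ∑ i, ∑ j, p i * ((G ^ k) i j : ℝ)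

/-- The block `B_s = blk⁻¹(s)` is communicated by the index `i`: there exist `k ≥ 0` and
`j ∈ B_s` with `(G^k)_{ij} > 0`. -/
def CommByIdx {N m : ℕ} (G : Matrix (Fin N) (Fin N) ℕ) (blk : Fin N → Fin m)
    (s : Fin m) (i : Fin N) : Prop :=
  ∃ k : ℕ, ∃ j : Fin N, blk j = s ∧ 0 < (G ^ k) i j

/-- The block `B_r` is communicated by the block `B_s`: it is communicated by some index of
`B_s`. -/
def CommByBlk {N m : ℕ} (G : Matrix (Fin N) (Fin N) ℕ) (blk : Fin N → Fin m)
    (r s : Fin m) : Prop :=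
  ∃ i : Fin N, blk i = s ∧ CommByIdx G blk r i

/-- The block `B_s` is a sink: `G_{ij} = 0` for all `i ∈ B_s` and `j ∉ B_s`. -/
def IsSinkBlk {N m : ℕ} (G : Matrix (Fin N) (Fin N) ℕ) (blk : Fin N → Fin m)
    (s : Fin m) : Prop :=
  ∀ i j : Fin N, blk i = s → blk j ≠ s → G i j = 0

/-- The block `B_s` is `μ`-maximal: `λ_s = μ` and `λ_s ≥ λ_r` for every block `B_r`
communicated by `B_s`. -/
def IsMaximalBlk {N m : ℕ} (G : Matrix (Fin N) (Fin N) ℕ) (blk : Fin N → Fin m)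
    (lam : Fin m → ℝ) (μ : ℝ) (s : Fin m) : Prop :=
  lam s = μ ∧ ∀ r : Fin m, CommByBlk G blk r s → lam r ≤ lam s

/-! The growth rate of `s_k(p)` is `μ`, the largest `λ_s` over the blocks communicated by the
support of `p`, in the sense that `c μ^(k - k₀) ≤ s_k(p) ≤ C_ε (μ + ε)^k` for every `ε > 0`.
The lower bound follows a path from `supp p` into a block with `λ_s = μ` and then uses
`G_s w_s = μ w_s` inside that block. For the upper bound, `v_i = ρ^(block of i) w_i` with `ρ` small
satisfies `G v ≤ (μ + ε) v` on the indices reachable from `supp p`: by block triangularity the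
off-diagonal entries lead only to later blocks, where `v` carries an extra factor `ρ`. Given these
bounds, the convergence of `∑ t⁻ᵏ s_k(p)` and `limsup s_k(p)^(1/k) < t` both amount to `μ < t`. -/

open Filter Topology Matrix

section GrowthRate

variable {u : ℕ → ℝ}

lemma tendsto_const_rpow_inv_natCast {C : ℝ} (hC : C ≠ 0) :
    Tendsto (fun k : ℕ => C ^ (k : ℝ)⁻¹) atTop (𝓝 1) := by
  simpa [Function.comp_def] using ((Real.continuousAt_const_rpow hC (b := 0)).tendsto).comp
    tendsto_inv_atTop_nhds_zero_nat

lemma eventually_rpow_inv_le_of_le_mul_pow (hu : ∀ k, 0 ≤ u k) {C r : ℝ} (hC : 0 ≤ C)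
    (hr : 0 ≤ r) (h : ∀ k, u k ≤ C * r ^ k) :
    ∀ᶠ k : ℕ in atTop, u k ^ (k : ℝ)⁻¹ ≤ C ^ (k : ℝ)⁻¹ * r := by
  filter_upwards [eventually_ne_atTop 0] with k hk
  calc u k ^ (k : ℝ)⁻¹ ≤ (C * r ^ k) ^ (k : ℝ)⁻¹ := by gcongr; exacts [hu k, h k]
    _ = C ^ (k : ℝ)⁻¹ * r := by
      rw [Real.mul_rpow hC (by positivity), Real.pow_rpow_inv_natCast hr hk]

lemma isBoundedUnder_rpow_inv_of_le_mul_pow (hu : ∀ k, 0 ≤ u k) {C r : ℝ} (hC : 0 < C)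
    (hr : 0 ≤ r) (h : ∀ k, u k ≤ C * r ^ k) :
    IsBoundedUnder (· ≤ ·) atTop fun k : ℕ => u k ^ (k : ℝ)⁻¹ :=
  ((tendsto_const_rpow_inv_natCast hC.ne').mul_const r).isBoundedUnder_le.mono_le
    (eventually_rpow_inv_le_of_le_mul_pow hu hC.le hr h)

lemma limsup_rpow_inv_le_of_le_mul_pow (hu : ∀ k, 0 ≤ u k) {C r : ℝ} (hC : 0 < C)
    (hr : 0 ≤ r) (h : ∀ k, u k ≤ C * r ^ k) :
    limsup (fun k : ℕ => u k ^ (k : ℝ)⁻¹) atTop ≤ r := by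
  have hlim := (tendsto_const_rpow_inv_natCast hC.ne').mul_const r
  rw [one_mul] at hlim
  refine (limsup_le_limsup (eventually_rpow_inv_le_of_le_mul_pow hu hC.le hr h)
    (isCoboundedUnder_le_of_le atTop fun k => Real.rpow_nonneg (hu k) _)
    hlim.isBoundedUnder_le).trans_eq hlim.limsup_eq

lemma summable_inv_pow_mul_of_limsup_rpow_inv_lt (hu : ∀ k, 0 ≤ u k)
    (hbdd : IsBoundedUnder (· ≤ ·) atTop fun k : ℕ => u k ^ (k : ℝ)⁻¹) {t : ℝ} (ht : 0 < t)
    (h : limsup (fun k : ℕ => u k ^ (k : ℝ)⁻¹) atTop < t) :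
    Summable fun k => t⁻¹ ^ k * u k := by
  obtain ⟨r, hlim, hrt⟩ := exists_between h
  have hroot := eventually_lt_of_limsup_lt hlim hbdd
  obtain ⟨k, hk⟩ := hroot.exists
  have hr : 0 ≤ r := (Real.rpow_nonneg (hu k) _).trans hk.le
  have hq : t⁻¹ * r < 1 := by rwa [inv_mul_lt_iff₀ ht, mul_one]
  refine (summable_geometric_of_lt_one (by positivity) hq).of_norm_bounded_eventually_nat ?_
  filter_upwards [hroot, eventually_ne_atTop 0] with k hk hk0
  rw [Real.norm_of_nonneg (by have := hu k; positivity), mul_pow]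
  gcongr
  calc u k = (u k ^ (k : ℝ)⁻¹) ^ k := (Real.rpow_inv_natCast_pow (hu k) hk0).symm
    _ ≤ r ^ k := by gcongr; exact Real.rpow_nonneg (hu k) _

lemma lt_of_summable_inv_pow_mul {μ c t : ℝ} {k₀ : ℕ} (hc : 0 < c) (ht : 0 < t)
    (h : ∀ n, c * μ ^ n ≤ u (k₀ + n)) (hs : Summable fun k => t⁻¹ ^ k * u k) : μ < t := by
  by_contra! htμ
  have hbound (n : ℕ) : c * t⁻¹ ^ k₀ ≤ t⁻¹ ^ (n + k₀) * u (n + k₀) :=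
    calc c * t⁻¹ ^ k₀ ≤ c * t⁻¹ ^ k₀ * (μ / t) ^ n :=
          le_mul_of_one_le_right (by positivity) (one_le_pow₀ ((one_le_div ht).2 htμ))
      _ = t⁻¹ ^ (n + k₀) * (c * μ ^ n) := by rw [div_eq_mul_inv, mul_pow, pow_add]; ring
      _ ≤ t⁻¹ ^ (n + k₀) * u (n + k₀) := by rw [add_comm n]; gcongr; exact h n
  have hzero := ((summable_nat_add_iff k₀).2 hs).tendsto_atTop_zero
  exact (ge_of_tendsto' hzero hbound).not_gt (by positivity)

theorem summable_inv_pow_mul_iff_limsup_rpow_inv_lt (hu : ∀ k, 0 ≤ u k) {μ t : ℝ}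
    (hμ : 0 ≤ μ) (ht : 0 < t) (hupper : ∀ ε > 0, ∃ C > 0, ∀ k, u k ≤ C * (μ + ε) ^ k)
    (hlower : ∃ c > 0, ∃ k₀, ∀ n, c * μ ^ n ≤ u (k₀ + n)) :
    (Summable fun k => t⁻¹ ^ k * u k) ↔ limsup (fun k : ℕ => u k ^ (k : ℝ)⁻¹) atTop < t := by
  constructor
  · intro hs
    obtain ⟨c, hc, k₀, h⟩ := hlower
    have hμt := lt_of_summable_inv_pow_mul hc ht h hs
    obtain ⟨C, hC, hCu⟩ := hupper ((t - μ) / 2) (by linarith)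
    have := limsup_rpow_inv_le_of_le_mul_pow hu hC (by linarith) hCu
    linarith
  · obtain ⟨C, hC, hCu⟩ := hupper 1 one_pos
    exact summable_inv_pow_mul_of_limsup_rpow_inv_lt hu
      (isBoundedUnder_rpow_inv_of_le_mul_pow hu hC (by linarith) hCu) ht

end GrowthRate

namespace Matrix

variable {ι : Type*} [Fintype ι] {A : Matrix ι ι ℝ}

lemma mulVec_mono_of_nonneg (hA : ∀ i j, 0 ≤ A i j) {v w : ι → ℝ} (h : v ≤ w) :
    A *ᵥ v ≤ A *ᵥ w :=
  fun i => Finset.sum_le_sum fun j _ => mul_le_mul_of_nonneg_left (h j) (hA i j)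

lemma mulVec_nonneg_of_nonneg (hA : ∀ i j, 0 ≤ A i j) {v : ι → ℝ} (hv : 0 ≤ v) :
    0 ≤ A *ᵥ v := by
  simpa using mulVec_mono_of_nonneg hA hv

lemma mulVec_pow_level_mul_le (hA : ∀ i j, 0 ≤ A i j) (ℓ : ι → ℕ)
    (hupper : ∀ i j, ℓ j < ℓ i → A i j = 0) {w : ι → ℝ} (hw : 0 ≤ w) {lam : ι → ℝ}
    (hdiag : ∀ i, ∑ j ∈ Finset.univ.filter (fun j => ℓ j = ℓ i), A i j * w j ≤ lam i * w i)
    {ρ ε : ℝ} (hρ0 : 0 ≤ ρ) (hρ1 : ρ ≤ 1) (hρ : ∀ i, ρ * (A *ᵥ w) i ≤ ε * w i) (i : ι) :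
    (A *ᵥ fun j => ρ ^ ℓ j * w j) i ≤ (lam i + ε) * (ρ ^ ℓ i * w i) := by
  have hterm (j : ι) : A i j * (ρ ^ ℓ j * w j) ≤
      (if ℓ j = ℓ i then ρ ^ ℓ i * (A i j * w j) else 0) + ρ ^ ℓ i * ρ * (A i j * w j) := by
    have hAw : 0 ≤ A i j * w j := mul_nonneg (hA i j) (hw j)
    rcases lt_trichotomy (ℓ j) (ℓ i) with h | h | h
    · simp [hupper i j h]
    · have : 0 ≤ ρ ^ ℓ i * ρ * (A i j * w j) := by positivity
      simp only [h, if_true]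
      linarith
    · have hpow : ρ ^ ℓ j ≤ ρ ^ ℓ i * ρ := by
        rw [← pow_succ]; exact pow_le_pow_of_le_one hρ0 hρ1 h
      simp only [h.ne', if_false, zero_add]
      calc A i j * (ρ ^ ℓ j * w j) = ρ ^ ℓ j * (A i j * w j) := by ring
        _ ≤ ρ ^ ℓ i * ρ * (A i j * w j) := by gcongr
  have hρi : 0 ≤ ρ ^ ℓ i := pow_nonneg hρ0 (ℓ i)
  calc (A *ᵥ fun j => ρ ^ ℓ j * w j) i = ∑ j, A i j * (ρ ^ ℓ j * w j) := rfl
    _ ≤ ∑ j, ((if ℓ j = ℓ i then ρ ^ ℓ i * (A i j * w j) else 0)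
          + ρ ^ ℓ i * ρ * (A i j * w j)) := Finset.sum_le_sum fun j _ => hterm j
    _ = ρ ^ ℓ i * ∑ j ∈ Finset.univ.filter (fun j => ℓ j = ℓ i), A i j * w j
          + ρ ^ ℓ i * (ρ * (A *ᵥ w) i) := by
        rw [Finset.sum_add_distrib, ← Finset.sum_filter, ← Finset.mul_sum, ← Finset.mul_sum,
          mul_assoc]
        rfl
    _ ≤ ρ ^ ℓ i * (lam i * w i) + ρ ^ ℓ i * (ε * w i) :=
        add_le_add (mul_le_mul_of_nonneg_left (hdiag i) hρi) (mul_le_mul_of_nonneg_left (hρ i) hρi)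
    _ = (lam i + ε) * (ρ ^ ℓ i * w i) := by ring

lemma exists_one_le_mulVec_le_add [Nonempty ι] (hA : ∀ i j, 0 ≤ A i j) (ℓ : ι → ℕ)
    (hupper : ∀ i j, ℓ j < ℓ i → A i j = 0) {w : ι → ℝ} (hw : ∀ i, 0 < w i) {lam : ι → ℝ}
    (hdiag : ∀ i, ∑ j ∈ Finset.univ.filter (fun j => ℓ j = ℓ i), A i j * w j ≤ lam i * w i)
    {ε : ℝ} (hε : 0 < ε) :
    ∃ v : ι → ℝ, (∀ i, 1 ≤ v i) ∧ ∀ i, (A *ᵥ v) i ≤ (lam i + ε) * v i := by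
  obtain ⟨ρ, ⟨hρ1, hρ⟩, hρ0⟩ :
      ∃ ρ : ℝ, (ρ < 1 ∧ ∀ i, ρ * (A *ᵥ w) i < ε * w i) ∧ 0 < ρ := by
    have hsmall : ∀ᶠ ρ in 𝓝 (0 : ℝ), ρ < 1 ∧ ∀ i, ρ * (A *ᵥ w) i < ε * w i :=
      (gt_mem_nhds one_pos).and <| eventually_all.2 fun i =>
        ((continuous_mul_const ((A *ᵥ w) i)).tendsto' 0 0 (zero_mul _)).eventually_lt_const
          (mul_pos hε (hw i))
    exact ((hsmall.filter_mono nhdsWithin_le_nhds).and self_mem_nhdsWithin).exists (f := 𝓝[>] 0)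
  set v₀ : ι → ℝ := fun j => ρ ^ ℓ j * w j
  have hv₀ := mulVec_pow_level_mul_le hA ℓ hupper (fun j => (hw j).le) hdiag hρ0.le hρ1.le
    fun i => (hρ i).le
  obtain ⟨x, hx⟩ := Finite.exists_min v₀
  have hx0 : 0 < v₀ x := mul_pos (pow_pos hρ0 _) (hw x)
  refine ⟨(v₀ x)⁻¹ • v₀, fun i => ?_, fun i => ?_⟩
  · rw [Pi.smul_apply, smul_eq_mul, le_inv_mul_iff₀ hx0, mul_one]
    exact hx i
  · rw [mulVec_smul, Pi.smul_apply, Pi.smul_apply, smul_eq_mul, smul_eq_mul, mul_left_comm]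
    exact mul_le_mul_of_nonneg_left (hv₀ i) (inv_nonneg.2 hx0.le)

variable [DecidableEq ι]

lemma pow_succ_mulVec_apply (k : ℕ) (v : ι → ℝ) (i : ι) :
    (A ^ (k + 1) *ᵥ v) i = ∑ j, A i j * (A ^ k *ᵥ v) j := by
  rw [pow_succ', ← mulVec_mulVec]
  rfl

lemma pow_mulVec_le_of_mulVec_le (hA : ∀ i j, 0 ≤ A i j) {S : Set ι}
    (hS : ∀ i j, i ∈ S → A i j ≠ 0 → j ∈ S) {v : ι → ℝ} {r : ℝ} (hr : 0 ≤ r)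
    (hv : ∀ i ∈ S, (A *ᵥ v) i ≤ r * v i) (k : ℕ) :
    ∀ i ∈ S, (A ^ k *ᵥ v) i ≤ r ^ k * v i := by
  induction k with
  | zero => simp
  | succ k ih =>
    intro i hi
    calc (A ^ (k + 1) *ᵥ v) i = ∑ j, A i j * (A ^ k *ᵥ v) j := pow_succ_mulVec_apply k v i
      _ ≤ ∑ j, A i j * (r ^ k * v j) := Finset.sum_le_sum fun j _ => by
          rcases eq_or_ne (A i j) 0 with h | h
          · simp [h]
          · exact mul_le_mul_of_nonneg_left (ih j (hS i j hi h)) (hA i j)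
      _ = r ^ k * (A *ᵥ v) i := by
          simp only [mulVec, dotProduct, Finset.mul_sum]
          exact Finset.sum_congr rfl fun j _ => by ring
      _ ≤ r ^ k * (r * v i) := by gcongr; exact hv i hi
      _ = r ^ (k + 1) * v i := by ring

lemma pow_mul_le_pow_mulVec_of_le_sum (hA : ∀ i j, 0 ≤ A i j) {v : ι → ℝ} (hv : 0 ≤ v)
    {T : Finset ι} {r : ℝ} (hr : 0 ≤ r) (h : ∀ i ∈ T, r * v i ≤ ∑ j ∈ T, A i j * v j)
    (k : ℕ) : ∀ i ∈ T, r ^ k * v i ≤ (A ^ k *ᵥ v) i := by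
  induction k with
  | zero => simp
  | succ k ih =>
    intro i hi
    calc r ^ (k + 1) * v i = r ^ k * (r * v i) := by ring
      _ ≤ r ^ k * ∑ j ∈ T, A i j * v j := by gcongr; exact h i hi
      _ = ∑ j ∈ T, A i j * (r ^ k * v j) := by
          rw [Finset.mul_sum]
          exact Finset.sum_congr rfl fun j _ => by ring
      _ ≤ ∑ j ∈ T, A i j * (A ^ k *ᵥ v) j :=
          Finset.sum_le_sum fun j hj => mul_le_mul_of_nonneg_left (ih j hj) (hA i j)
      _ ≤ ∑ j, A i j * (A ^ k *ᵥ v) j :=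
          Finset.sum_le_sum_of_subset_of_nonneg (Finset.subset_univ _) fun j _ _ =>
            mul_nonneg (hA i j) (mulVec_nonneg_of_nonneg (pow_apply_nonneg hA k) hv j)
      _ = (A ^ (k + 1) *ᵥ v) i := (pow_succ_mulVec_apply k v i).symm

lemma pow_apply_mul_pow_mulVec_le (hA : ∀ i j, 0 ≤ A i j) {v : ι → ℝ} (hv : 0 ≤ v)
    (a b : ℕ) (i j : ι) : (A ^ a) i j * (A ^ b *ᵥ v) j ≤ (A ^ (a + b) *ᵥ v) i := by
  rw [pow_add, ← mulVec_mulVec]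
  exact Finset.single_le_sum (f := fun j => (A ^ a) i j * (A ^ b *ᵥ v) j)
    (fun j _ => mul_nonneg (pow_apply_nonneg hA a i j)
      (mulVec_nonneg_of_nonneg (pow_apply_nonneg hA b) hv j)) (Finset.mem_univ j)

end Matrix

section PathCounts

variable {N : ℕ} (G : Matrix (Fin N) (Fin N) ℕ)

lemma map_natCast_pow (k : ℕ) : (G.map ((↑) : ℕ → ℝ)) ^ k = (G ^ k).map (↑) := by
  simpa using (Matrix.map_pow G (Nat.castRingHom ℝ) k).symm

lemma pow_succ_apply_pos {k : ℕ} {i j x : Fin N} (hij : 0 < (G ^ k) i j) (hjx : 0 < G j x) :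
    0 < (G ^ (k + 1)) i x := by
  rw [pow_succ, Matrix.mul_apply]
  exact (Nat.mul_pos hij hjx).trans_le <| Finset.single_le_sum
    (f := fun y => (G ^ k) i y * G y x) (fun _ _ => Nat.zero_le _) (Finset.mem_univ j)

variable {G} {p : Fin N → ℝ}

lemma sk_eq_sum_mul_pow_mulVec_one (k : ℕ) :
    sk G p k = ∑ i, p i * ((G.map ((↑) : ℕ → ℝ)) ^ k *ᵥ 1) i := by
  simp [sk, map_natCast_pow, Matrix.mulVec, dotProduct, Finset.mul_sum]

lemma sk_nonneg (hp : ∀ i, 0 ≤ p i) (k : ℕ) : 0 ≤ sk G p k :=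
  Finset.sum_nonneg fun i _ => Finset.sum_nonneg fun _ _ => mul_nonneg (hp i) (Nat.cast_nonneg _)

lemma sk_le_mul_pow (hp : ∀ i, 0 ≤ p i) {v : Fin N → ℝ} (hv : ∀ i, 1 ≤ v i) {r : ℝ}
    (h : ∀ k i, 0 < p i → ((G.map ((↑) : ℕ → ℝ)) ^ k *ᵥ v) i ≤ r ^ k * v i) (k : ℕ) :
    sk G p k ≤ (∑ i, p i * v i) * r ^ k := by
  rw [sk_eq_sum_mul_pow_mulVec_one, Finset.sum_mul]
  refine Finset.sum_le_sum fun i _ => ?_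
  rcases (hp i).eq_or_lt with hpi | hpi
  · simp [← hpi]
  · calc p i * ((G.map ((↑) : ℕ → ℝ)) ^ k *ᵥ 1) i
        ≤ p i * ((G.map ((↑) : ℕ → ℝ)) ^ k *ᵥ v) i := by
          gcongr
          exact Matrix.mulVec_mono_of_nonneg
            (Matrix.pow_apply_nonneg (fun i j => Nat.cast_nonneg (G i j)) k) hv i
      _ ≤ p i * (r ^ k * v i) := by gcongr; exact h k i hpi
      _ = p i * v i * r ^ k := by ring

variable {m : ℕ} {blk : Fin N → Fin m} {lam : Fin m → ℝ} {w : Fin N → ℝ}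

lemma exists_sk_le_mul_add_pow [Nonempty (Fin N)]
    (hupper : ∀ i j : Fin N, blk j < blk i → G i j = 0) (hw : ∀ i, 0 < w i)
    (heig : ∀ i : Fin N,
      ∑ j ∈ Finset.univ.filter (fun j => blk j = blk i), (G i j : ℝ) * w j
        = lam (blk i) * w i)
    (hp : ∀ i, 0 ≤ p i) (hps : ∑ i, p i = 1) {μ : ℝ} (hμ : 0 ≤ μ)
    (hreach : ∀ i j k, 0 < p i → 0 < (G ^ k) i j → lam (blk j) ≤ μ) {ε : ℝ} (hε : 0 < ε) :
    ∃ C > 0, ∀ k, sk G p k ≤ C * (μ + ε) ^ k := by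
  have hA : ∀ i j, 0 ≤ G.map ((↑) : ℕ → ℝ) i j := fun i j => Nat.cast_nonneg (G i j)
  obtain ⟨v, hv1, hv⟩ := Matrix.exists_one_le_mulVec_le_add hA (fun i => (blk i : ℕ))
    (fun i j h => by simp [hupper i j h]) hw
    (fun i => by simpa only [Fin.val_inj, Matrix.map_apply] using (heig i).le) hε
  set S : Set (Fin N) := {j | ∃ i k, 0 < p i ∧ 0 < (G ^ k) i j}
  have hS : ∀ j x, j ∈ S → G.map ((↑) : ℕ → ℝ) j x ≠ 0 → x ∈ S := by
    rintro j x ⟨i, k, hpi, hij⟩ hjx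
    exact ⟨i, k + 1, hpi, pow_succ_apply_pos G hij (Nat.pos_of_ne_zero (by simpa using hjx))⟩
  have hvS : ∀ j ∈ S, (G.map ((↑) : ℕ → ℝ) *ᵥ v) j ≤ (μ + ε) * v j := by
    rintro j ⟨i, k, hpi, hij⟩
    exact (hv j).trans (by gcongr; exacts [zero_le_one.trans (hv1 j), hreach i j k hpi hij])
  refine ⟨∑ i, p i * v i, ?_, sk_le_mul_pow hp hv1 fun k i hpi =>
    Matrix.pow_mulVec_le_of_mulVec_le hA hS (by positivity) hvS k i ⟨i, 0, hpi, by simp⟩⟩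
  calc (0 : ℝ) < ∑ i, p i := by rw [hps]; exact one_pos
    _ ≤ ∑ i, p i * v i := Finset.sum_le_sum fun i _ => le_mul_of_one_le_right (hp i) (hv1 i)

lemma exists_mul_pow_le_sk (hw : ∀ i, 0 < w i)
    (heig : ∀ i : Fin N,
      ∑ j ∈ Finset.univ.filter (fun j => blk j = blk i), (G i j : ℝ) * w j
        = lam (blk i) * w i)
    (hp : ∀ i, 0 ≤ p i) {i j : Fin N} {k₀ : ℕ} (hpi : 0 < p i) (hij : 0 < (G ^ k₀) i j)
    (hlam : 0 ≤ lam (blk j)) :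
    ∃ c > 0, ∀ n, c * lam (blk j) ^ n ≤ sk G p (k₀ + n) := by
  set A := G.map ((↑) : ℕ → ℝ)
  have hA : ∀ i j, 0 ≤ A i j := fun i j => Nat.cast_nonneg (G i j)
  have : Nonempty (Fin N) := ⟨i⟩
  obtain ⟨x, hx⟩ := Finite.exists_max w
  have hx0 : w x ≠ 0 := (hw x).ne'
  have hc : 0 ≤ p i / w x := div_nonneg hpi.le (hw x).le
  refine ⟨p i * w j / w x, div_pos (mul_pos hpi (hw j)) (hw x), fun n => ?_⟩
  have hblock : lam (blk j) ^ n * w j ≤ (A ^ n *ᵥ w) j := by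
    refine Matrix.pow_mul_le_pow_mulVec_of_le_sum hA (fun i => (hw i).le) hlam
      (T := Finset.univ.filter fun y => blk y = blk j) (fun y hy => ?_) n j (by simp)
    rw [← (Finset.mem_filter.1 hy).2]
    exact (heig y).ge
  have hpath : (1 : ℝ) ≤ (A ^ k₀) i j := by
    rw [map_natCast_pow]; exact Nat.one_le_cast.2 hij
  calc p i * w j / w x * lam (blk j) ^ n
      = p i / w x * (lam (blk j) ^ n * w j) := by ring
    _ ≤ p i / w x * ((A ^ k₀) i j * (A ^ n *ᵥ w) j) := by
        refine mul_le_mul_of_nonneg_left ?_ hc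
        exact hblock.trans (le_mul_of_one_le_left
          (Matrix.mulVec_nonneg_of_nonneg (Matrix.pow_apply_nonneg hA n) (fun y => (hw y).le) j)
          hpath)
    _ ≤ p i / w x * (A ^ (k₀ + n) *ᵥ w) i := by
        refine mul_le_mul_of_nonneg_left ?_ hc
        exact Matrix.pow_apply_mul_pow_mulVec_le hA (fun i => (hw i).le) k₀ n i j
    _ ≤ p i / w x * (w x * (A ^ (k₀ + n) *ᵥ 1) i) := by
        refine mul_le_mul_of_nonneg_left ?_ hc
        rw [← smul_eq_mul, ← Pi.smul_apply, ← Matrix.mulVec_smul]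
        exact Matrix.mulVec_mono_of_nonneg (Matrix.pow_apply_nonneg hA _)
          (fun y => by simpa using hx y) i
    _ = p i * (A ^ (k₀ + n) *ᵥ 1) i := by field_simp
    _ ≤ sk G p (k₀ + n) := by
        rw [sk_eq_sum_mul_pow_mulVec_one]
        exact Finset.single_le_sum (f := fun y => p y * (A ^ (k₀ + n) *ᵥ 1) y)
          (fun y _ => mul_nonneg (hp y) (Matrix.mulVec_nonneg_of_nonneg
            (Matrix.pow_apply_nonneg hA _) zero_le_one y)) (Finset.mem_univ i)

end PathCounts

theorem stmt_9_general
    -- Context: `G` is an `N × N` matrix with nonnegative integer entries, block upper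
    -- triangular with respect to the partition of `Fin N` into `m` nonempty consecutive
    -- blocks given by the fibers of the monotone surjection `blk`; each diagonal block
    -- `G_s` has eigenvalue `λ_s ≥ 0` with strictly positive eigenvector `w|_{B_s}`.
    (N m : ℕ)
    (G : Matrix (Fin N) (Fin N) ℕ)
    (blk : Fin N → Fin m)
    (hupper : ∀ i j : Fin N, blk j < blk i → G i j = 0)
    (lam : Fin m → ℝ) (hlam : ∀ s, 0 ≤ lam s)
    (w : Fin N → ℝ) (hw : ∀ i, 0 < w i)
    (heig : ∀ i : Fin N,
      ∑ j ∈ Finset.univ.filter (fun j => blk j = blk i), (G i j : ℝ) * w j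
        = lam (blk i) * w i)
    :
    ∀ p : Fin N → ℝ, (∀ i, 0 ≤ p i) → (∑ i, p i = 1) →
      ∀ t : ℝ, 1 < t →
        (Summable (fun k : ℕ => t⁻¹ ^ k * sk G p k) ↔
          Filter.limsup (fun k : ℕ => sk G p k ^ ((k : ℝ)⁻¹)) Filter.atTop < t) := by
  classical
  intro p hp hps t ht
  obtain ⟨i₀, hi₀⟩ : ∃ i, 0 < p i := by
    by_contra! h
    linarith [Finset.sum_nonpos fun i (_ : i ∈ Finset.univ) => h i]
  have : Nonempty (Fin N) := ⟨i₀⟩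
  obtain ⟨s, hs, hmax⟩ := Finset.exists_max_image
    (Finset.univ.filter fun s => ∃ i, 0 < p i ∧ CommByIdx G blk s i) lam
    ⟨blk i₀, Finset.mem_filter.2 ⟨Finset.mem_univ _, i₀, hi₀, 0, i₀, rfl, by simp⟩⟩
  obtain ⟨i, hi, k₀, j, rfl, hij⟩ := (Finset.mem_filter.1 hs).2
  have hreach (i' j' : Fin N) (k : ℕ) (hi' : 0 < p i') (h : 0 < (G ^ k) i' j') :
      lam (blk j') ≤ lam (blk j) :=
    hmax _ (Finset.mem_filter.2 ⟨Finset.mem_univ _, i', hi', k, j', rfl, h⟩)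
  obtain ⟨c, hc, hlower⟩ := exists_mul_pow_le_sk hw heig hp hi hij (hlam _)
  exact summable_inv_pow_mul_iff_limsup_rpow_inv_lt (sk_nonneg hp) (hlam _) (by linarith)
    (fun ε hε => exists_sk_le_mul_add_pow hupper hw heig hp hps (hlam _) hreach hε)
    ⟨c, hc, k₀, hlower⟩

/-- for every probability vector `p` and every real `t > 1`, the series
`∑_k t^{-k} s_k(p)` converges iff `limsup_k s_k(p)^{1/k} < t`. -/
theorem stmt_9
    -- Context: `G` is an `N × N` matrix with nonnegative integer entries, block upper
    -- triangular with respect to the partition of `Fin N` into `m` nonempty consecutive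
    -- blocks given by the fibers of the monotone surjection `blk`; each diagonal block
    -- `G_s` has eigenvalue `λ_s ≥ 0` with strictly positive eigenvector `w|_{B_s}`.
    (N m : ℕ) (hN : 1 ≤ N) (hm : 1 ≤ m)
    (G : Matrix (Fin N) (Fin N) ℕ)
    (blk : Fin N → Fin m) (hmono : Monotone blk) (hsurj : Function.Surjective blk)
    (hupper : ∀ i j : Fin N, blk j < blk i → G i j = 0)
    (lam : Fin m → ℝ) (hlam : ∀ s, 0 ≤ lam s)
    (w : Fin N → ℝ) (hw : ∀ i, 0 < w i)
    (heig : ∀ i : Fin N,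
      ∑ j ∈ Finset.univ.filter (fun j => blk j = blk i), (G i j : ℝ) * w j
        = lam (blk i) * w i)
    :
    ∀ p : Fin N → ℝ, (∀ i, 0 ≤ p i) → (∑ i, p i = 1) →
      ∀ t : ℝ, 1 < t →
        (Summable (fun k : ℕ => t⁻¹ ^ k * sk G p k) ↔
          Filter.limsup (fun k : ℕ => sk G p k ^ ((k : ℝ)⁻¹)) Filter.atTop < t) :=
  stmt_9_general N m G blk hupper lam hlam w hw heig
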